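/- arXiv:2003.02313 — 4 statements merged into one kernel-verified Lean document; each statement's English description precedes it below -/
import Mathlib

section
/- For nonnegative integers h ≥ 1, n', and positive integers s_1,...,s_h with n' ≥ s_1+...+s_h, the number of vectors (r_1,...,r_h) of distinct integers with 1 ≤ r_j ≤ n' for all j, satisfying r_j ≥ Σ_{i: r_i < r_j} s_i + s_j for every j (equivalently, each r_j is at least the total stock of products stocked out at or before index r_j), equals (n'+1)!/(n'+1-h)! − (n')!/(n'+1-h)! · (s_1+...+s_h). -/
/-!
Let `j` be the product that stocks out last, at `m = r j`. Every other `r i` is smaller than `m`,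
the constraint at `j` only says `∑ s ≤ m`, and deleting `j` leaves a feasible vector for the
remaining products inside the horizon `m - 1`. Conversely every such vector extends uniquely.
Summing over `j` and `m ∈ [∑ s, n]` and inducting on the number of products gives the count
`(n + 1 - ∑ s) · n (n - 1) ⋯ (n - h + 2)`; the sum over `m` telescopes.
-/

open Finset Function
open scoped Nat

namespace Nat

theorem descFactorial_succ_add_mul (n k : ℕ) :
    n.descFactorial (k + 1) + k * n.descFactorial k = n * n.descFactorial k := by
  rw [descFactorial_succ]
  rcases le_or_gt k n with hkn | hnk
  · rw [← add_mul, Nat.sub_add_cancel hkn]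
  · simp [descFactorial_eq_zero_iff_lt.2 hnk]

theorem cast_descFactorial_eq_div {K : Type*} [DivisionSemiring K] [CharZero K] {n k : ℕ}
    (h : k ≤ n) : (n.descFactorial k : K) = n ! / (n - k)! := by
  rw [eq_div_iff (Nat.cast_ne_zero.2 (factorial_ne_zero _)), ← Nat.cast_mul, mul_comm,
    factorial_mul_descFactorial h]

theorem sum_Icc_mul_descFactorial (k S n : ℕ) :
    ∑ m ∈ Icc S n, ((k + 2) * (m - S) + S) * (m - 1).descFactorial k
      = (n + 1 - S) * n.descFactorial (k + 1) := by
  induction n with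
  | zero => rcases Nat.eq_zero_or_pos S with rfl | hS <;> simp [*]
  | succ n ih =>
    rcases le_or_gt S (n + 1) with hSn | hnS
    · rw [sum_Icc_succ_top hSn, ih, Nat.add_sub_cancel, succ_descFactorial_succ]
      have := descFactorial_succ_add_mul n k
      zify [hSn, hSn.trans n.succ.le_succ] at this ⊢
      linear_combination (n + 1 - (S : ℤ)) * this
    · rw [Icc_eq_empty (by omega), Nat.sub_eq_zero_of_le hnS]
      simp

end Nat

namespace Fin

variable {k : ℕ} {α : Type*}

theorem insertNth_injective_iff {j : Fin (k + 1)} {x : α} {q : Fin k → α} :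
    Injective (j.insertNth x q) ↔ Injective q ∧ x ∉ Set.range q := by
  refine ⟨fun hinj => ⟨fun a b hab => succAbove_right_injective (p := j)
    (hinj (by simpa using hab)), ?_⟩, fun ⟨hq, hx⟩ a b hab => ?_⟩
  · rintro ⟨i, hi⟩
    exact succAbove_ne j i (hinj (by simpa using hi))
  · induction a using succAboveCases j <;> induction b using succAboveCases j <;>
      simp_all [eq_comm, hq.eq_iff]

theorem insertNth_inj_of_forall_lt [Preorder α] {j j' : Fin (k + 1)} {x x' : α}
    {q q' : Fin k → α} (hq : ∀ i, q i < x) (hq' : ∀ i, q' i < x') :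
    (j.insertNth x q : Fin (k + 1) → α) = j'.insertNth x' q' ↔
      j = j' ∧ x = x' ∧ q = q' := by
  refine ⟨fun h => ?_, by rintro ⟨rfl, rfl, rfl⟩; rfl⟩
  obtain rfl : j = j' := by
    by_contra hne
    obtain ⟨i, hi⟩ := exists_succAbove_eq hne
    obtain ⟨i', hi'⟩ := exists_succAbove_eq (Ne.symm hne)
    have h₁ := congr_fun h (j'.succAbove i)
    have h₂ := congr_fun h (j.succAbove i')
    rw [insertNth_apply_succAbove, hi, insertNth_apply_same] at h₁
    rw [insertNth_apply_succAbove, hi', insertNth_apply_same] at h₂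
    exact lt_asymm (h₁ ▸ hq' i) (h₂ ▸ hq i')
  exact ⟨rfl, insertNth_inj.1 h⟩

theorem sum_filter_insertNth_le [LinearOrder α] {M : Type*} [AddCommMonoid M]
    (s : Fin (k + 1) → M) {j : Fin (k + 1)} {x t : α} {q : Fin k → α} (ht : t < x) :
    ∑ i ∈ univ.filter (fun i => (j.insertNth x q : Fin (k + 1) → α) i ≤ t), s i
      = ∑ i ∈ univ.filter (fun i => q i ≤ t), j.removeNth s i := by
  simp [sum_filter, sum_univ_succAbove _ j, not_le.2 ht, removeNth]

end Fin

def stockoutVectors {h : ℕ} (n : ℕ) (s : Fin h → ℕ) : Finset (Fin h → ℕ) :=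
  (Fintype.piFinset fun _ => Icc 1 n).filter fun r =>
    Injective r ∧ ∀ j, ∑ i ∈ univ.filter (fun i => r i ≤ r j), s i ≤ r j

section

variable {h n : ℕ} {s : Fin h → ℕ}

theorem mem_stockoutVectors {r : Fin h → ℕ} :
    r ∈ stockoutVectors n s ↔ Injective r ∧ (∀ j, 1 ≤ r j ∧ r j ≤ n) ∧
      ∀ j, ∑ i ∈ univ.filter (fun i => r i ≤ r j), s i ≤ r j := by
  simp only [stockoutVectors, mem_filter, Fintype.mem_piFinset, mem_Icc]
  tauto

theorem coe_stockoutVectors : (stockoutVectors n s : Set (Fin h → ℕ)) =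
    {r | Injective r ∧ (∀ j, 1 ≤ r j ∧ r j ≤ n) ∧
      ∀ j, ∑ i ∈ univ.filter (fun i => r i ≤ r j), s i ≤ r j} := by
  ext r
  exact mem_stockoutVectors

end

theorem card_stockoutVectors_zero (n : ℕ) (s : Fin 0 → ℕ) : #(stockoutVectors n s) = 1 := by
  rw [card_eq_one]
  exact ⟨finZeroElim, by
    ext r; simp [mem_stockoutVectors, injective_of_subsingleton, Subsingleton.elim r finZeroElim]⟩

theorem insertNth_mem_stockoutVectors_iff {k n m : ℕ} {s : Fin (k + 1) → ℕ} {j : Fin (k + 1)}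
    {q : Fin k → ℕ} (hm : 0 < m) (hSm : ∑ i, s i ≤ m) (hmn : m ≤ n) :
    j.insertNth m q ∈ stockoutVectors n s ∧ (∀ i, q i < m) ↔
      q ∈ stockoutVectors (m - 1) (j.removeNth s) := by
  rw [mem_stockoutVectors, mem_stockoutVectors, Fin.insertNth_injective_iff]
  simp only [Fin.forall_iff_succAbove j, Fin.insertNth_apply_same, Fin.insertNth_apply_succAbove]
  constructor
  · rintro ⟨⟨⟨hinj, -⟩, ⟨-, hbd⟩, -, hsum⟩, hq⟩
    refine ⟨hinj, fun i => ⟨(hbd i).1, by have := hq i; omega⟩, fun t => ?_⟩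
    rw [← Fin.sum_filter_insertNth_le s (hq t)]
    exact hsum t
  · rintro ⟨hinj, hbd, hsum⟩
    have hq : ∀ i, q i < m := fun i => by have := (hbd i).2; omega
    refine ⟨⟨⟨hinj, fun ⟨i, hi⟩ => (hq i).ne hi⟩, ⟨⟨hm, hmn⟩, fun i => ⟨(hbd i).1, by
      have := (hbd i).2; omega⟩⟩, (sum_le_sum_of_subset (filter_subset _ _)).trans hSm,
      fun t => ?_⟩, hq⟩
    rw [Fin.sum_filter_insertNth_le s (hq t)]
    exact hsum t

theorem card_stockoutVectors_succ_eq_sum {k n : ℕ} (s : Fin (k + 1) → ℕ) (hS : 0 < ∑ i, s i) :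
    #(stockoutVectors n s) = ∑ j : Fin (k + 1), ∑ m ∈ Icc (∑ i, s i) n,
      #(stockoutVectors (m - 1) (j.removeNth s)) := by
  rw [← sum_product' (f := fun (j : Fin (k + 1)) m =>
    #(stockoutVectors (m - 1) (j.removeNth s))), ← card_sigma]
  have hiff {j : Fin (k + 1)} {m : ℕ} {q : Fin k → ℕ} (hm : m ∈ Icc (∑ i, s i) n) :=
    insertNth_mem_stockoutVectors_iff (j := j) (q := q) (hS.trans_le (mem_Icc.1 hm).1)
      (mem_Icc.1 hm).1 (mem_Icc.1 hm).2
  symm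
  refine card_bij (fun p _ => p.1.1.insertNth p.1.2 p.2) ?_ ?_ ?_
  · rintro ⟨⟨j, m⟩, q⟩ hp
    simp only [mem_sigma, mem_product, mem_univ, true_and] at hp
    exact ((hiff hp.1).2 hp.2).1
  · rintro ⟨⟨j, m⟩, q⟩ hp ⟨⟨j', m'⟩, q'⟩ hp' h
    simp only [mem_sigma, mem_product, mem_univ, true_and] at hp hp'
    obtain ⟨rfl, rfl, rfl⟩ :=
      (Fin.insertNth_inj_of_forall_lt ((hiff hp.1).2 hp.2).2 ((hiff hp'.1).2 hp'.2).2).1 h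
    rfl
  · intro r hr
    obtain ⟨hinj, hbd, hsum⟩ := mem_stockoutVectors.1 hr
    obtain ⟨j, hj⟩ := Finite.exists_max r
    have hlt : ∀ i, j.removeNth r i < r j :=
      fun i => (hj _).lt_of_ne (hinj.ne (j.succAbove_ne i))
    have hSj : ∑ i, s i ≤ r j := by simpa [filter_true_of_mem fun i _ => hj i] using hsum j
    have hm : r j ∈ Icc (∑ i, s i) n := mem_Icc.2 ⟨hSj, (hbd j).2⟩
    refine ⟨⟨(j, r j), j.removeNth r⟩, ?_, Fin.insertNth_self_removeNth j r⟩
    simp only [mem_sigma, mem_product, mem_univ, true_and]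
    refine ⟨hm, (hiff hm).1 ⟨?_, hlt⟩⟩
    rwa [Fin.insertNth_self_removeNth]

theorem card_stockoutVectors {k n : ℕ} (s : Fin (k + 1) → ℕ) (hs : ∀ i, 1 ≤ s i) :
    #(stockoutVectors n s) = (n + 1 - ∑ i, s i) * n.descFactorial k := by
  have hS {h : ℕ} {s : Fin (h + 1) → ℕ} (hs : ∀ i, 1 ≤ s i) : 0 < ∑ i, s i :=
    sum_pos (fun i _ => hs i) univ_nonempty
  induction k generalizing n with
  | zero => simp [card_stockoutVectors_succ_eq_sum s (hS hs), card_stockoutVectors_zero]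
  | succ k ih =>
    have hfiber : ∀ j, ∀ m ∈ Icc (∑ i, s i) n, #(stockoutVectors (m - 1) (j.removeNth s))
        = (m - ∑ i, s i + s j) * (m - 1).descFactorial k := by
      intro j m hm
      have hsum := Fin.add_sum_removeNth j s
      have hsj := hs j
      obtain ⟨hSm, -⟩ := mem_Icc.1 hm
      rw [ih (j.removeNth s) (fun i => hs _), ← hsum]
      congr 1
      omega
    rw [card_stockoutVectors_succ_eq_sum s (hS hs), sum_comm, ← Nat.sum_Icc_mul_descFactorial]
    refine sum_congr rfl fun m hm => ?_
    rw [sum_congr rfl fun j _ => hfiber j m hm, ← sum_mul, sum_add_distrib]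
    simp

theorem stockout_vector_count_general (h n' : ℕ) (s : Fin h → ℕ)
    (hs : ∀ i, 1 ≤ s i) (hn : (∑ i, s i) ≤ n') :
    (Set.ncard {r : Fin h → ℕ |
        Function.Injective r ∧
        (∀ j, 1 ≤ r j ∧ r j ≤ n') ∧
        (∀ j, (∑ i ∈ Finset.univ.filter (fun i => r i ≤ r j), s i) ≤ r j)} : ℚ)
      = (Nat.factorial (n' + 1) : ℚ) / (Nat.factorial (n' + 1 - h))
        - (Nat.factorial n' : ℚ) / (Nat.factorial (n' + 1 - h)) * (∑ i, s i) := by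
  rw [← coe_stockoutVectors, Set.ncard_coe_finset]
  cases h with
  | zero => simp [card_stockoutVectors_zero, Nat.factorial_ne_zero]
  | succ k =>
    have hk : k + 1 ≤ n' := by
      simpa using (card_nsmul_le_sum univ s 1 fun i _ => hs i).trans hn
    rw [card_stockoutVectors s hs, ← Nat.cast_descFactorial_eq_div (by omega),
      Nat.add_sub_add_right, ← Nat.cast_descFactorial_eq_div (by omega),
      Nat.succ_descFactorial_succ, Nat.cast_mul, Nat.cast_sub (by omega)]
    push_cast
    ring

/-- Counting feasible stock-out index vectors: `h ≥ 1` products with stock levels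
`s 0, …, s (h-1) ≥ 1` stock out at distinct indices `r j ∈ {1,…,n'}` of an arrival
sequence of length `n' ≥ Σ s`, where each `r j` must be at least the total stock of
products stocked out at or before index `r j`.  The number of such vectors equals
`(n'+1)!/(n'+1-h)! − (n')!/(n'+1-h)! · (Σ s)`. -/
theorem stockout_vector_count (h n' : ℕ) (hh : 1 ≤ h) (s : Fin h → ℕ)
    (hs : ∀ i, 1 ≤ s i) (hn : (∑ i, s i) ≤ n') :
    (Set.ncard {r : Fin h → ℕ |
        Function.Injective r ∧
        (∀ j, 1 ≤ r j ∧ r j ≤ n') ∧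
        (∀ j, (∑ i ∈ Finset.univ.filter (fun i => r i ≤ r j), s i) ≤ r j)} : ℚ)
      = (Nat.factorial (n' + 1) : ℚ) / (Nat.factorial (n' + 1 - h))
        - (Nat.factorial n' : ℚ) / (Nat.factorial (n' + 1 - h)) * (∑ i, s i) :=
  stockout_vector_count_general h n' s hs hn
end

section
/- Fix k ≥ 0, nonnegative integers ñ^{[1]},...,ñ^{[k+1]} with sum ñ − k (k ≥ 1 stock-outs contribute one transaction each; if k=0, the sum is ñ), reals p_1,...,p_{k+1} ∈ [0,1], and λ, T > 0. Then Σ_{(n_1,...,n_{k+1}) ∈ ℕ_0^{k+1}} (Tλ)^{ñ+Σn_j} e^{−Tλ}/(ñ+Σn_j)! · Π_j C(n_j + ñ^{[j]}, n_j) · Π_j p_j^{n_j} equals ∫ over the simplex {ť ≥ 0 : Σ_{j=1}^{k+1} ť_j = T} of λ^ñ e^{−Σ_j (1−p_j) ť_j λ} · Π_j (ť_j)^{ñ^{[j]}}/ñ^{[j]}! dť, where the integration is with respect to k-dimensional Lebesgue measure on the simplex. -/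
open Finset MeasureTheory

open intervalIntegral
open scoped ENNReal

lemma simplex_measurable (k : ℕ) (T : ℝ) :
    MeasurableSet {u : Fin k → ℝ | (∀ j, 0 ≤ u j) ∧ (∑ j, u j) ≤ T} := by
  have : {u : Fin k → ℝ | (∀ j, 0 ≤ u j) ∧ (∑ j, u j) ≤ T}
      = (⋂ j, {u : Fin k → ℝ | 0 ≤ u j}) ∩ {u : Fin k → ℝ | (∑ j, u j) ≤ T} := by
    ext u; simp [Set.mem_iInter]
  rw [this]
  exact (MeasurableSet.iInter fun j =>
      measurableSet_le measurable_const (measurable_pi_apply j)).inter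
    (measurableSet_le (by fun_prop) measurable_const)

lemma snoc_continuous {k : ℕ} (T : ℝ) (j : Fin (k+1)) :
    Continuous fun u : Fin k → ℝ => (Fin.snoc u (T - ∑ i, u i) : Fin (k+1) → ℝ) j := by
  induction j using Fin.lastCases with
  | last => simp only [Fin.snoc_last]; fun_prop
  | cast i => simp only [Fin.snoc_castSucc]; exact continuous_apply i

lemma prod_snoc_continuous {k : ℕ} (T : ℝ) (a : Fin (k+1) → ℕ) :
    Continuous fun u : Fin k → ℝ =>
      ∏ j, (Fin.snoc u (T - ∑ i, u i) : Fin (k+1) → ℝ) j ^ a j :=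
  continuous_finset_prod _ fun j _ => (snoc_continuous T j).pow (a j)

lemma beta_nat (n : ℕ) : ∀ (m : ℕ) (T : ℝ), 0 ≤ T →
    ∫ x in (0:ℝ)..T, x ^ m * (T - x) ^ n
      = T ^ (m + n + 1) * ((m.factorial : ℝ) * n.factorial) / (m + n + 1).factorial := by
  induction n with
  | zero =>
    intro m T hT
    simp [integral_pow]
    rw [Nat.factorial_succ]
    push_cast
    field_simp
  | succ n ih =>
    intro m T hT
    have key : ((m : ℝ) + 1) * ∫ x in (0:ℝ)..T, x ^ m * (T - x) ^ (n + 1)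
        = ((n : ℝ) + 1) * ∫ x in (0:ℝ)..T, x ^ (m + 1) * (T - x) ^ n := by
      have hderiv : ∀ x ∈ Set.uIcc (0:ℝ) T,
          HasDerivAt (fun y : ℝ => y ^ (m + 1) * (T - y) ^ (n + 1))
            (((m:ℝ)+1) * x ^ m * (T - x) ^ (n+1) - ((n:ℝ)+1) * (x ^ (m+1) * (T - x) ^ n)) x := by
        intro x _
        have h1 : HasDerivAt (fun y : ℝ => y ^ (m + 1)) (((m:ℝ)+1) * x ^ m) x := by
          simpa using hasDerivAt_pow (m+1) x
        have h2 : HasDerivAt (fun y : ℝ => (T - y) ^ (n + 1))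
            (-(((n:ℝ)+1) * (T - x) ^ n)) x := by
          have h3 : HasDerivAt (fun y : ℝ => T - y) (-1) x := by
            simpa using (hasDerivAt_id x).const_sub T
          simpa [mul_comm, mul_assoc] using h3.fun_pow (n+1)
        have := h1.fun_mul h2
        exact this.congr_deriv (by ring)
      have hint : IntervalIntegrable
          (fun x : ℝ => ((m:ℝ)+1) * x ^ m * (T - x) ^ (n+1) - ((n:ℝ)+1) * (x ^ (m+1) * (T - x) ^ n))
          volume 0 T := by
        apply Continuous.intervalIntegrable; fun_prop
      have h0 := integral_eq_sub_of_hasDerivAt hderiv hint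
      rw [intervalIntegral.integral_sub ((by fun_prop : Continuous fun x:ℝ => ((m:ℝ)+1) * x ^ m * (T - x) ^ (n+1)).intervalIntegrable _ _)
        ((by fun_prop : Continuous fun x:ℝ => ((n:ℝ)+1) * (x ^ (m+1) * (T - x) ^ n)).intervalIntegrable _ _)] at h0
      have e1 : ∫ x in (0:ℝ)..T, ((m:ℝ)+1) * x ^ m * (T - x) ^ (n+1)
          = ((m:ℝ)+1) * ∫ x in (0:ℝ)..T, x ^ m * (T - x) ^ (n+1) := by
        rw [← intervalIntegral.integral_const_mul]
        congr 1; ext x; ring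
      have e2 : ∫ x in (0:ℝ)..T, ((n:ℝ)+1) * (x ^ (m+1) * (T - x) ^ n)
          = ((n:ℝ)+1) * ∫ x in (0:ℝ)..T, x ^ (m+1) * (T - x) ^ n := by
        rw [← intervalIntegral.integral_const_mul]
      rw [e1, e2] at h0
      norm_num at h0
      linarith [h0]
    have hm1 : ((m:ℝ) + 1) ≠ 0 := by positivity
    have := ih (m+1) T hT
    have goal : ∫ x in (0:ℝ)..T, x ^ m * (T - x) ^ (n+1)
        = ((n:ℝ)+1) / ((m:ℝ)+1) * (T ^ (m + 1 + n + 1) * ((m+1).factorial * n.factorial) / (m + 1 + n + 1).factorial) := by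
      rw [← this]
      field_simp at key ⊢
      linarith [key]
    rw [goal]
    have harg : m + 1 + n + 1 = m + (n+1) + 1 := by omega
    rw [harg, Nat.factorial_succ m, Nat.factorial_succ n]
    push_cast
    have hfac : ((m + (n+1) + 1).factorial : ℝ) ≠ 0 := by positivity
    field_simp

lemma dirichlet : ∀ (k : ℕ) (a : Fin (k+1) → ℕ) (T : ℝ), 0 ≤ T →
    ∫⁻ u in {u : Fin k → ℝ | (∀ j, 0 ≤ u j) ∧ (∑ j, u j) ≤ T},
      ENNReal.ofReal (∏ j, (Fin.snoc u (T - ∑ i, u i) : Fin (k+1) → ℝ) j ^ a j) ∂volume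
      = ENNReal.ofReal (T ^ (∑ j, a j + k) * (∏ j, ((a j).factorial : ℝ))
          / ((∑ j, a j + k).factorial)) := by
  intro k
  induction k with
  | zero =>
    intro a T hT
    have hset : {u : Fin 0 → ℝ | (∀ j, 0 ≤ u j) ∧ (∑ j, u j) ≤ T} = Set.univ := by
      ext u
      simp only [Set.mem_setOf_eq, Set.mem_univ, iff_true]
      refine ⟨fun j => j.elim0, ?_⟩
      simpa using hT
    rw [hset, Measure.restrict_univ]
    have hint : ∀ u : Fin 0 → ℝ,
        (∏ j, (Fin.snoc u (T - ∑ i, u i) : Fin 1 → ℝ) j ^ a j) = T ^ a 0 := by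
      intro u
      rw [Fin.prod_univ_one]
      have h0 : (0 : Fin 1) = Fin.last 0 := rfl
      rw [h0, Fin.snoc_last]
      simp
    simp_rw [hint]
    rw [lintegral_const]
    have hv : (volume : Measure (Fin 0 → ℝ)) Set.univ = 1 := by
      simp [MeasureTheory.volume_pi, Measure.pi_univ]
    rw [hv, mul_one]
    have h1 : ((a 0).factorial : ℝ) ≠ 0 := by positivity
    rw [Fin.sum_univ_one, Fin.prod_univ_one]
    simp [mul_div_assoc, div_self h1]
  | succ k ih =>
    intro a T hT
    set S : Set (Fin (k+1) → ℝ) := {u | (∀ j, 0 ≤ u j) ∧ (∑ j, u j) ≤ T} with hSdef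
    have hSm : MeasurableSet S := simplex_measurable _ _
    set F : (Fin (k+1) → ℝ) → ℝ≥0∞ := fun u =>
      ENNReal.ofReal (∏ j, (Fin.snoc u (T - ∑ i, u i) : Fin (k+2) → ℝ) j ^ a j) with hFdef
    have hFm : Measurable F := (prod_snoc_continuous T a).measurable.ennreal_ofReal
    rw [← lintegral_indicator hSm]
    set e := MeasurableEquiv.piFinSuccAbove (fun _ : Fin (k+1) => ℝ) 0 with hedef
    have hmp : MeasurePreserving e.symm
        (volume : Measure (ℝ × (Fin k → ℝ))) (volume : Measure (Fin (k+1) → ℝ)) :=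
      (MeasureTheory.volume_preserving_piFinSuccAbove (fun _ : Fin (k+1) => ℝ) 0).symm
    rw [MeasurePreserving.lintegral_map_equiv _ _ hmp]
    have hsymm : ∀ z : ℝ × (Fin k → ℝ), e.symm z = Fin.cons z.1 z.2 := by
      intro z
      simp only [hedef, MeasurableEquiv.piFinSuccAbove_symm_apply]
      exact Fin.insertNth_zero' z.1 z.2
    have hmeas : Measurable fun z : ℝ × (Fin k → ℝ) => S.indicator F (e.symm z) :=
      (hFm.indicator hSm).comp e.symm.measurable
    rw [Measure.volume_eq_prod, lintegral_prod _ hmeas.aemeasurable]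
    simp only [hsymm]
    set B : ℕ := ∑ j : Fin (k+1), a j.succ with hBdef
    set P : ℝ := ∏ j : Fin (k+1), ((a j.succ).factorial : ℝ) with hPdef
    have key : ∀ x : ℝ, (∫⁻ v, S.indicator F (Fin.cons x v) ∂volume)
        = Set.indicator (Set.Icc 0 T) (fun x => ENNReal.ofReal (x ^ a 0)
            * ENNReal.ofReal ((T - x) ^ (B + k) * P / (B + k).factorial)) x := by
      intro x
      by_cases hx0 : 0 ≤ x
      · -- rewrite the integrand
        have hF : ∀ v : Fin k → ℝ, S.indicator F (Fin.cons x v)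
            = Set.indicator {v : Fin k → ℝ | (∀ j, 0 ≤ v j) ∧ (∑ j, v j) ≤ T - x}
                (fun v => ENNReal.ofReal (x ^ a 0)
                  * ENNReal.ofReal (∏ j, (Fin.snoc v ((T - x) - ∑ i, v i)
                      : Fin (k+1) → ℝ) j ^ a j.succ)) v := by
          intro v
          have hmem : Fin.cons x v ∈ S ↔
              v ∈ {v : Fin k → ℝ | (∀ j, 0 ≤ v j) ∧ (∑ j, v j) ≤ T - x} := by
            rw [hSdef]
            simp only [Set.mem_setOf_eq, Fin.forall_fin_succ, Fin.cons_zero, Fin.cons_succ,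
              Fin.sum_cons]
            constructor
            · rintro ⟨⟨-, h2⟩, h3⟩
              exact ⟨h2, by linarith⟩
            · rintro ⟨h2, h3⟩
              exact ⟨⟨hx0, h2⟩, by linarith⟩
          have hFval : F (Fin.cons x v) = ENNReal.ofReal (x ^ a 0)
              * ENNReal.ofReal (∏ j, (Fin.snoc v ((T - x) - ∑ i, v i)
                  : Fin (k+1) → ℝ) j ^ a j.succ) := by
            have hsn : (Fin.snoc (Fin.cons x v) (T - ∑ i, (Fin.cons x v) i)
                : Fin (k+2) → ℝ) = Fin.cons x (Fin.snoc v ((T - x) - ∑ i, v i)) := by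
              rw [← Fin.cons_snoc_eq_snoc_cons, Fin.sum_cons]
              congr 1
              ring
            simp only [hFdef]
            rw [hsn, Fin.prod_univ_succ]
            simp only [Fin.cons_zero, Fin.cons_succ]
            rw [ENNReal.ofReal_mul (pow_nonneg hx0 _)]
          by_cases hv : v ∈ {v : Fin k → ℝ | (∀ j, 0 ≤ v j) ∧ (∑ j, v j) ≤ T - x}
          · rw [Set.indicator_of_mem (hmem.2 hv), Set.indicator_of_mem hv, hFval]
          · rw [Set.indicator_of_notMem (fun h => hv (hmem.1 h)),
              Set.indicator_of_notMem hv]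
        simp_rw [hF]
        rw [lintegral_indicator (simplex_measurable k (T - x)),
          lintegral_const_mul' _ _ ENNReal.ofReal_ne_top]
        by_cases hxT : x ≤ T
        · rw [ih (fun j => a j.succ) (T - x) (by linarith),
            Set.indicator_of_mem (Set.mem_Icc.2 ⟨hx0, hxT⟩)]
        · have hempty : {v : Fin k → ℝ | (∀ j, 0 ≤ v j) ∧ (∑ j, v j) ≤ T - x} = ∅ := by
            ext v
            simp only [Set.mem_setOf_eq, Set.mem_empty_iff_false, iff_false, not_and]
            intro h1 h2
            have : (0:ℝ) ≤ ∑ j, v j := Finset.sum_nonneg fun j _ => h1 j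
            linarith
          rw [hempty]
          simp only [Measure.restrict_empty, lintegral_zero_measure, mul_zero]
          rw [Set.indicator_of_notMem (by simp [Set.mem_Icc]; intro h; linarith)]
      · have hzero : ∀ v : Fin k → ℝ, S.indicator F (Fin.cons x v) = 0 := by
          intro v
          apply Set.indicator_of_notMem
          rw [hSdef]
          simp only [Set.mem_setOf_eq, not_and]
          intro h
          exact absurd (h 0) (by simpa using hx0)
        simp_rw [hzero]
        rw [lintegral_zero, Set.indicator_of_notMem (by simp [Set.mem_Icc]; intro h; linarith)]
    simp_rw [key]
    rw [lintegral_indicator measurableSet_Icc]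
    have hcongr : ∫⁻ x in Set.Icc 0 T, (ENNReal.ofReal (x ^ a 0)
          * ENNReal.ofReal ((T - x) ^ (B + k) * P / (B + k).factorial)) ∂volume
        = ∫⁻ x in Set.Icc 0 T, ENNReal.ofReal (x ^ a 0
          * ((T - x) ^ (B + k) * P / (B + k).factorial)) ∂volume := by
      apply setLIntegral_congr_fun measurableSet_Icc
      intro x hx
      dsimp only
      rw [ENNReal.ofReal_mul (pow_nonneg hx.1 _)]
    rw [hcongr]
    rw [← MeasureTheory.ofReal_integral_eq_lintegral_ofReal]
    · congr 1
      rw [MeasureTheory.integral_Icc_eq_integral_Ioc, ← intervalIntegral.integral_of_le hT]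
      have : ∀ x : ℝ, x ^ a 0 * ((T - x) ^ (B + k) * P / (B + k).factorial)
          = (P / (B + k).factorial) * (x ^ a 0 * (T - x) ^ (B + k)) := fun x => by ring
      simp_rw [this]
      rw [intervalIntegral.integral_const_mul, beta_nat (B + k) (a 0) T hT]
      have harg : a 0 + (B + k) + 1 = (a 0 + B) + (k + 1) := by omega
      rw [harg]
      have hsum : ∑ j : Fin (k+2), a j = a 0 + B := by
        rw [Fin.sum_univ_succ, hBdef]
      have hprod : ∏ j : Fin (k+2), ((a j).factorial : ℝ) = ((a 0).factorial : ℝ) * P := by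
        rw [Fin.prod_univ_succ, hPdef]
      rw [hsum, hprod]
      have hfne : ((B + k).factorial : ℝ) ≠ 0 := by positivity
      have hfne2 : (((a 0 + B) + (k + 1)).factorial : ℝ) ≠ 0 := by positivity
      field_simp
    · apply Continuous.integrableOn_Icc
      fun_prop
    · apply (ae_restrict_iff' measurableSet_Icc).2
      apply ae_of_all
      intro x hx
      have h1 : (0:ℝ) ≤ x ^ a 0 := pow_nonneg hx.1 _
      have h2 : (0:ℝ) ≤ (T - x) ^ (B + k) := pow_nonneg (by linarith [hx.2]) _
      have h3 : (0:ℝ) ≤ P := by rw [hPdef]; positivity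
      have h4 : (0:ℝ) < ((B + k).factorial : ℝ) := by positivity
      positivity

lemma tsum_pi_prod : ∀ (n : ℕ) (f : Fin n → ℕ → ℝ≥0∞),
    ∑' m : Fin n → ℕ, ∏ j, f j (m j) = ∏ j, ∑' i, f j i := by
  intro n
  induction n with
  | zero =>
    intro f
    simp only [Finset.univ_eq_empty, Finset.prod_empty]
    exact tsum_eq_single (fun i => i.elim0) (fun b hb => absurd (Subsingleton.elim b _) hb) |>.trans rfl
  | succ n ih =>
    intro f
    rw [← (Fin.consEquiv (fun _ : Fin (n+1) => ℕ)).tsum_eq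
        (fun m : Fin (n+1) → ℕ => ∏ j, f j (m j)), ENNReal.tsum_prod']
    have hterm : ∀ (x : ℕ) (v : Fin n → ℕ),
        (fun m : Fin (n+1) → ℕ => ∏ j, f j (m j))
          ((Fin.consEquiv (fun _ : Fin (n+1) => ℕ)) (x, v))
          = f 0 x * ∏ j : Fin n, f j.succ (v j) := by
      intro x v
      have hc : (Fin.consEquiv fun _ : Fin (n+1) => ℕ) (x, v) = Fin.cons x v := rfl
      simp only [hc]
      rw [Fin.prod_univ_succ]
      simp
    simp_rw [hterm, ENNReal.tsum_mul_left, ih (fun j => f j.succ), ENNReal.tsum_mul_right]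
    rw [Fin.prod_univ_succ]

lemma tsum_toReal_ofReal {ι : Type*} {f : ι → ℝ} (hf : ∀ i, 0 ≤ f i) :
    (∑' i, ENNReal.ofReal (f i)).toReal = ∑' i, f i := by
  by_cases hs : Summable f
  · rw [← ENNReal.ofReal_tsum_of_nonneg hf hs, ENNReal.toReal_ofReal (tsum_nonneg hf)]
  · rw [tsum_eq_zero_of_not_summable hs]
    by_cases htop : (∑' i, ENNReal.ofReal (f i)) = ∞
    · rw [htop]; rfl
    · exfalso
      apply hs
      have := ENNReal.summable_toReal htop
      simpa only [ENNReal.toReal_ofReal (hf _)] using this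

/-- Equivalence of the summation and integral representations of the transaction-sequence
likelihood: with `k` stock-outs, block transaction counts `ñ^{[j]}` summing to `ñ − k`,
null probabilities `p_j ∈ [0,1]` and `λ, T > 0`,
`Σ_{(n_j) ∈ ℕ₀^{k+1}} (Tλ)^{ñ+Σn_j} e^{−Tλ}/(ñ+Σn_j)! · Π_j C(n_j+ñ^{[j]}, n_j) · Π_j p_j^{n_j}`
equals the integral over the simplex `{ť ≥ 0 : Σ_{j=1}^{k+1} ť_j = T}` (parametrized by
its first `k` coordinates) of `λ^ñ e^{−Σ_j (1−p_j) ť_j λ} · Π_j ť_j^{ñ^{[j]}}/ñ^{[j]}!`. -/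
theorem transaction_likelihood_sum_eq_integral (k nTot : ℕ) (nt : Fin (k + 1) → ℕ)
    (hnt : (∑ j, nt j) + k = nTot)
    (p : Fin (k + 1) → ℝ) (hp : ∀ j, 0 ≤ p j ∧ p j ≤ 1)
    (lam T : ℝ) (hlam : 0 < lam) (hT : 0 < T) :
    (∑' m : Fin (k + 1) → ℕ,
        (T * lam) ^ (nTot + ∑ j, m j) * Real.exp (-(T * lam))
            / (Nat.factorial (nTot + ∑ j, m j))
          * (∏ j, ((m j + nt j).choose (m j) : ℝ))
          * ∏ j, p j ^ m j)
      = ∫ u in {u : Fin k → ℝ | (∀ j, 0 ≤ u j) ∧ (∑ j, u j) ≤ T},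
          lam ^ nTot
            * Real.exp (-(∑ j, (1 - p j)
                * (Fin.snoc u (T - ∑ i, u i) : Fin (k + 1) → ℝ) j * lam))
            * ∏ j, ((Fin.snoc u (T - ∑ i, u i) : Fin (k + 1) → ℝ) j) ^ nt j
                / (Nat.factorial (nt j)) := by
  set S : Set (Fin k → ℝ) := {u : Fin k → ℝ | (∀ j, 0 ≤ u j) ∧ (∑ j, u j) ≤ T} with hSdef
  have hSm : MeasurableSet S := simplex_measurable k T
  -- abbreviations
  set tm : (Fin (k + 1) → ℕ) → ℝ := fun m =>
    (T * lam) ^ (nTot + ∑ j, m j) * Real.exp (-(T * lam))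
        / (Nat.factorial (nTot + ∑ j, m j))
      * (∏ j, ((m j + nt j).choose (m j) : ℝ))
      * ∏ j, p j ^ m j with htmdef
  set g : (Fin k → ℝ) → ℝ := fun u =>
    lam ^ nTot
      * Real.exp (-(∑ j, (1 - p j)
          * (Fin.snoc u (T - ∑ i, u i) : Fin (k + 1) → ℝ) j * lam))
      * ∏ j, ((Fin.snoc u (T - ∑ i, u i) : Fin (k + 1) → ℝ) j) ^ nt j
          / (Nat.factorial (nt j)) with hgdef
  set Cm : (Fin (k + 1) → ℕ) → ℝ := fun m =>
    lam ^ nTot * Real.exp (-(T * lam))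
      * ∏ j, ((p j * lam) ^ m j / (((m j).factorial : ℝ) * (nt j).factorial)) with hCmdef
  set term : (Fin (k + 1) → ℕ) → (Fin k → ℝ) → ℝ := fun m u =>
    Cm m * ∏ j, ((Fin.snoc u (T - ∑ i, u i) : Fin (k + 1) → ℝ) j) ^ (m j + nt j) with htermdef
  have hA_nonneg : 0 ≤ lam ^ nTot * Real.exp (-(T * lam)) :=
    mul_nonneg (pow_nonneg hlam.le _) (Real.exp_nonneg _)
  have hCm_nonneg : ∀ m, 0 ≤ Cm m := by
    intro m
    apply mul_nonneg hA_nonneg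
    apply Finset.prod_nonneg
    intro j _
    exact div_nonneg (pow_nonneg (mul_nonneg (hp j).1 hlam.le) _) (by positivity)
  have htm_nonneg : ∀ m, 0 ≤ tm m := by
    intro m
    apply mul_nonneg (mul_nonneg (div_nonneg (mul_nonneg (by positivity) (Real.exp_nonneg _))
      (by positivity)) (Finset.prod_nonneg fun j _ => by positivity))
    exact Finset.prod_nonneg fun j _ => pow_nonneg (hp j).1 _
  have hts : ∀ u ∈ S, ∀ j : Fin (k + 1),
      0 ≤ (Fin.snoc u (T - ∑ i, u i) : Fin (k + 1) → ℝ) j := by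
    intro u hu j
    induction j using Fin.lastCases with
    | last => rw [Fin.snoc_last]; have := hu.2; simp only [sub_nonneg]; linarith
    | cast i => rw [Fin.snoc_castSucc]; exact hu.1 i
  have hg_nonneg : ∀ u ∈ S, 0 ≤ g u := by
    intro u hu
    apply mul_nonneg (mul_nonneg (pow_nonneg hlam.le _) (Real.exp_nonneg _))
    exact Finset.prod_nonneg fun j _ =>
      div_nonneg (pow_nonneg (hts u hu j) _) (by positivity)
  have hgc : Continuous g := by
    rw [hgdef]
    apply Continuous.mul
    · apply continuous_const.mul
      apply Real.continuous_exp.comp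
      apply Continuous.neg
      exact continuous_finset_sum _ fun j _ =>
        (continuous_const.mul (snoc_continuous T j)).mul continuous_const
    · exact continuous_finset_prod _ fun j _ =>
        ((snoc_continuous T j).pow (nt j)).div_const _
  have hterm_cont : ∀ m, Continuous (term m) := by
    intro m
    rw [htermdef]
    exact continuous_const.mul
      (continuous_finset_prod _ fun j _ => (snoc_continuous T j).pow _)
  -- pointwise expansion on S
  have hpt : ∀ u ∈ S, ENNReal.ofReal (g u)
      = ∑' m : Fin (k + 1) → ℕ, ENNReal.ofReal (term m u) := by
    intro u hu
    set t : Fin (k + 1) → ℝ := (Fin.snoc u (T - ∑ i, u i) : Fin (k + 1) → ℝ) with htdef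
    have ht : ∀ j, 0 ≤ t j := hts u hu
    have hsum_t : ∑ j, t j = T := by
      rw [htdef, Fin.sum_univ_castSucc]
      simp only [Fin.snoc_castSucc, Fin.snoc_last]
      ring
    have hg : g u = (lam ^ nTot * Real.exp (-(T * lam)))
        * ∏ j, (Real.exp (p j * t j * lam) * (t j ^ nt j / ((nt j).factorial : ℝ))) := by
      have h1 : ∑ j, (1 - p j) * t j * lam = T * lam - ∑ j, p j * t j * lam := by
        have h2 : ∀ j : Fin (k+1), (1 - p j) * t j * lam
            = t j * lam - p j * t j * lam := fun j => by ring
        rw [Finset.sum_congr rfl fun j _ => h2 j, Finset.sum_sub_distrib,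
          ← Finset.sum_mul, hsum_t]
      rw [hgdef]
      simp only [← htdef]
      rw [h1, show -(T * lam - ∑ j, p j * t j * lam)
        = -(T * lam) + ∑ j, p j * t j * lam from by ring, Real.exp_add, Real.exp_sum]
      rw [Finset.prod_mul_distrib]
      ring
    rw [hg, ENNReal.ofReal_mul hA_nonneg,
      ENNReal.ofReal_prod_of_nonneg (fun j _ => mul_nonneg (Real.exp_nonneg _)
        (div_nonneg (pow_nonneg (ht j) _) (by positivity)))]
    have hfactor : ∀ j : Fin (k + 1),
        ENNReal.ofReal (Real.exp (p j * t j * lam) * (t j ^ nt j / ((nt j).factorial : ℝ)))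
          = ∑' n : ℕ, ENNReal.ofReal
              ((p j * t j * lam) ^ n / (n.factorial : ℝ)
                * (t j ^ nt j / ((nt j).factorial : ℝ))) := by
      intro j
      have hx : 0 ≤ p j * t j * lam := mul_nonneg (mul_nonneg (hp j).1 (ht j)) hlam.le
      rw [Real.exp_eq_exp_ℝ, NormedSpace.exp_eq_tsum_div, ← tsum_mul_right]
      exact ENNReal.ofReal_tsum_of_nonneg
        (fun n => mul_nonneg (div_nonneg (pow_nonneg hx n) (by positivity))
          (div_nonneg (pow_nonneg (ht j) _) (by positivity)))
        ((Real.summable_pow_div_factorial _).mul_right _)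
    rw [Finset.prod_congr rfl fun j _ => hfactor j,
      ← tsum_pi_prod (k + 1) (fun j n => ENNReal.ofReal
        ((p j * t j * lam) ^ n / (n.factorial : ℝ)
          * (t j ^ nt j / ((nt j).factorial : ℝ)))),
      ← ENNReal.tsum_mul_left]
    apply tsum_congr
    intro m
    rw [← ENNReal.ofReal_prod_of_nonneg (fun j _ =>
      mul_nonneg (div_nonneg (pow_nonneg (mul_nonneg (mul_nonneg (hp j).1 (ht j)) hlam.le) _)
        (by positivity)) (div_nonneg (pow_nonneg (ht j) _) (by positivity))),
      ← ENNReal.ofReal_mul hA_nonneg]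
    congr 1
    simp only [htermdef, hCmdef, ← htdef]
    have hj : ∀ j : Fin (k+1), (p j * t j * lam) ^ m j / ((m j).factorial : ℝ)
          * (t j ^ nt j / ((nt j).factorial : ℝ))
        = (p j * lam) ^ m j / (((m j).factorial : ℝ) * (nt j).factorial)
          * t j ^ (m j + nt j) := by
      intro j
      rw [mul_pow, mul_pow, pow_add]
      have h1 : ((m j).factorial : ℝ) ≠ 0 := by positivity
      have h2 : ((nt j).factorial : ℝ) ≠ 0 := by positivity
      field_simp
      ring
    rw [Finset.prod_congr rfl fun j _ => hj j, Finset.prod_mul_distrib]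
    ring
  -- main chain
  have hcore : (∑' m, ENNReal.ofReal (tm m)) = ∫⁻ u in S, ENNReal.ofReal (g u) := by
    rw [setLIntegral_congr_fun hSm hpt,
      lintegral_tsum (fun m => ((hterm_cont m).measurable.ennreal_ofReal).aemeasurable)]
    apply tsum_congr
    intro m
    have hsplit : ∀ u : Fin k → ℝ, ENNReal.ofReal (term m u)
        = ENNReal.ofReal (Cm m) * ENNReal.ofReal
            (∏ j, ((Fin.snoc u (T - ∑ i, u i) : Fin (k + 1) → ℝ) j) ^ (m j + nt j)) := by
      intro u
      rw [htermdef, ENNReal.ofReal_mul (hCm_nonneg m)]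
    simp_rw [hsplit]
    rw [lintegral_const_mul' _ _ ENNReal.ofReal_ne_top,
      dirichlet k (fun j => m j + nt j) T hT.le,
      ← ENNReal.ofReal_mul (hCm_nonneg m)]
    congr 1
    have hNat : (∑ j, (m j + nt j)) + k = nTot + ∑ j, m j := by
      rw [Finset.sum_add_distrib]
      omega
    rw [hNat]
    simp only [hCmdef, htmdef]
    have hfact_j : ∀ j : Fin (k+1), ((m j + nt j).factorial : ℝ)
        = ((m j + nt j).choose (m j) : ℝ) * (m j).factorial * (nt j).factorial := by
      intro j
      have h := Nat.choose_mul_factorial_mul_factorial (Nat.le_add_right (m j) (nt j))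
      rw [Nat.add_sub_cancel_left] at h
      exact_mod_cast h.symm
    have hprod : (∏ j, ((p j * lam) ^ m j / (((m j).factorial : ℝ) * (nt j).factorial)))
          * ∏ j, ((m j + nt j).factorial : ℝ)
        = lam ^ (∑ j, m j) * (∏ j, ((m j + nt j).choose (m j) : ℝ)) * ∏ j, p j ^ m j := by
      rw [← Finset.prod_pow_eq_pow_sum, ← Finset.prod_mul_distrib,
        ← Finset.prod_mul_distrib, ← Finset.prod_mul_distrib]
      apply Finset.prod_congr rfl
      intro j _
      rw [hfact_j j, mul_pow]
      have h1 : ((m j).factorial : ℝ) ≠ 0 := by positivity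
      have h2 : ((nt j).factorial : ℝ) ≠ 0 := by positivity
      field_simp
    have hexpand : lam ^ nTot * Real.exp (-(T * lam))
          * (∏ j, ((p j * lam) ^ m j / (((m j).factorial : ℝ) * (nt j).factorial)))
          * (T ^ (nTot + ∑ j, m j) * (∏ j, ((m j + nt j).factorial : ℝ))
              / ((nTot + ∑ j, m j).factorial : ℝ))
        = lam ^ nTot * Real.exp (-(T * lam)) * T ^ (nTot + ∑ j, m j)
            / ((nTot + ∑ j, m j).factorial : ℝ)
          * ((∏ j, ((p j * lam) ^ m j / (((m j).factorial : ℝ) * (nt j).factorial)))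
              * ∏ j, ((m j + nt j).factorial : ℝ)) := by ring
    rw [hexpand, hprod, mul_pow, pow_add]
    ring
  have hLHS : (∑' m, tm m) = (∑' m, ENNReal.ofReal (tm m)).toReal :=
    (tsum_toReal_ofReal htm_nonneg).symm
  have hRHS : ∫ u in S, g u ∂volume
      = (∫⁻ u in S, ENNReal.ofReal (g u)).toReal := by
    apply integral_eq_lintegral_of_nonneg_ae
    · exact (ae_restrict_iff' hSm).2 (ae_of_all _ hg_nonneg)
    · exact hgc.aestronglyMeasurable
  rw [hLHS, hcore, ← hRHS]
end

section
/- For any finite set A, positive reals (f_a)_{a∈A}, nonnegative integers (n_a)_{a∈A}, define the attraction probabilities on any subset S ⊆ A by P_{a:S} = f_a / Σ_{a'∈S} f_{a'} (no null alternative). If n = Σ_a n_a and one product a* with n_{a*} = s_{a*} stocks out, then the probability that the sales vector equals (n_a) given n total arrivals equals [ (n − n_{a*})! / Π_{a≠a*} n_a! · Π_{a≠a*} P_{a:A\{a*}}^{n_a} ] · Σ_{m=0}^{n−n_{a*}} C(n_{a*}−1+m, m) · P_{a*:A}^{n_{a*}} · (1 − P_{a*:A})^m, provided the attraction model satisfies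 P_{a:A} = (1 − P_{a*:A}) · P_{a:A\{a*}} for all a ≠ a*. -/
open Finset

/-!
Under the factorization `P_{a:A} = (1 - P_{a*:A}) P_{a:A∖{a*}}`, every sale of a product
`a ≠ a*` made while `a*` is still in stock contributes `(1 - P_{a*:A}) P_{a:A∖{a*}}`, and every
later one `P_{a:A∖{a*}}`. Hence the probability of a sales sequence depends only on the sales
vector and on the number `j` of sales of other products before the last sale of `a*`: it is
`P_{a*:A}^{n_{a*}} (1 - P_{a*:A})^j ∏_{a ≠ a*} P_{a:A∖{a*}}^{n_a}`. The sequences with given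
`a*`-sale times are counted by the multinomial coefficient `(n - n_{a*})! / ∏_{a ≠ a*} n_a!`,
and exactly `C(n_{a*} - 1 + j, j)` sets of `n_{a*}` sale times leave `j` other times before their
last element.
-/

theorem card_filter_coe_sort {ι : Type*} (T : Finset ι) (q : ι → Prop) [DecidablePred q] :
    #{k : T | q k} = #{x ∈ T | q x} := by
  rw [card_filter, card_filter, sum_coe_sort T (fun x => if q x then 1 else 0)]

theorem card_filter_compl_eq {ι B : Type*} [Fintype ι] [DecidableEq ι] [DecidableEq B]
    {a : ι → B} {c p : B} {S : Finset ι} (hS : ({i | a i = c} : Finset ι) = S) (hpc : p ≠ c) :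
    #{x ∈ Sᶜ | a x = p} = #{x | a x = p} := by
  subst hS
  congr 1
  ext x
  simp only [mem_filter, mem_compl, mem_univ, true_and]
  exact ⟨And.right, fun h => ⟨by rw [h]; exact hpc, h⟩⟩

section Words
variable {ι B : Type*} [Fintype ι] [DecidableEq ι] [Fintype B] [DecidableEq B]

theorem card_filter_card_fiber_eq_multinomial (g : B → ℕ) (hg : ∑ p, g p = Fintype.card ι) :
    #{b : ι → B | ∀ p, #{i | b i = p} = g p} = Nat.multinomial univ g := by
  -- Both sides are the coefficient of `∏ p, X p ^ g p` in `(∑ p, X p) ^ card ι`: on the left,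
  -- after expanding the power into a sum over words `b : ι → B`.
  let d : B →₀ ℕ := Finsupp.equivFunOnFinite.symm g
  have hd : d.sum (fun _ k => k) = Fintype.card ι := by
    rw [Finsupp.sum_fintype _ _ fun _ => rfl]; exact hg
  have key := MvPolynomial.coeff_sum_X_pow_of_fintype (R := ℕ) d (Fintype.card ι)
  rw [if_pos hd, Finsupp.multinomial_eq_of_support_subset (subset_univ _)] at key
  change _ = Nat.multinomial univ d
  rw [← Nat.cast_id (Nat.multinomial univ d), ← key, ← card_univ, ← prod_const,
    Fintype.prod_sum, MvPolynomial.coeff_sum]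
  simp_rw [MvPolynomial.X, ← MvPolynomial.monomial_sum_one, MvPolynomial.coeff_monomial]
  rw [sum_boole, Nat.cast_id]
  congr 1
  refine filter_congr fun b _ => ?_
  rw [Finsupp.ext_iff]
  refine forall_congr' fun p => ?_
  simp [d, Finsupp.finsetSum_apply, Finsupp.single_apply]


theorem card_filter_fiber_eq_card_restrict (g : B → ℕ) (c : B) (S : Finset ι) (hS : g c = #S) :
    #{a : ι → B | (∀ p, #{i | a i = p} = g p) ∧ ({i | a i = c} : Finset ι) = S}
      = #{b : ↥Sᶜ → B | ∀ p, #{k | b k = p} = Function.update g c 0 p} := by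
  refine card_nbij' (fun a k => a k) (fun b x => if h : x ∈ Sᶜ then b ⟨x, h⟩ else c)
    ?_ ?_ ?_ ?_
  · intro a ha
    simp only [mem_coe, mem_filter, mem_univ, true_and] at ha ⊢
    obtain ⟨hcount, hfiber⟩ := ha
    intro p
    rw [card_filter_coe_sort Sᶜ (fun x => a x = p)]
    rcases eq_or_ne p c with rfl | hpc
    · simp [← hfiber]
    · rw [Function.update_of_ne hpc, card_filter_compl_eq hfiber hpc, hcount p]
  · intro b hb
    simp only [mem_coe, mem_filter, mem_univ, true_and] at hb ⊢
    set a : ι → B := fun x => if h : x ∈ Sᶜ then b ⟨x, h⟩ else c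
    have hres : ∀ k : ↥Sᶜ, a k = b k := fun k => dif_pos k.2
    have hbc : ∀ k, b k ≠ c := by
      intro k hk
      have := hb c
      simp only [Function.update_self, card_eq_zero, filter_eq_empty_iff] at this
      exact this (mem_univ k) hk
    have hfiber : ({i | a i = c} : Finset ι) = S := by
      ext x
      by_cases hx : x ∈ S
      · simp [a, hx]
      · simp [a, hx, hbc]
    refine ⟨fun p => ?_, hfiber⟩
    rcases eq_or_ne p c with rfl | hpc
    · rw [hfiber, hS]
    · rw [← Function.update_of_ne hpc (0 : ℕ) g, ← hb p, ← card_filter_compl_eq hfiber hpc,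
        ← card_filter_coe_sort]
      simp only [hres]
  · intro a ha
    simp only [mem_coe, mem_filter, mem_univ, true_and] at ha
    funext x
    by_cases hx : x ∈ S
    · have : x ∈ ({i | a i = c} : Finset ι) := ha.2 ▸ hx
      simp [hx, (mem_filter.1 this).2]
    · simp [hx]
  · intro b _
    funext k
    simp

theorem card_filter_fiber_eq_multinomial (g : B → ℕ) (hg : ∑ p, g p = Fintype.card ι) (c : B)
    (S : Finset ι) (hS : g c = #S) :
    #{a : ι → B | (∀ p, #{i | a i = p} = g p) ∧ ({i | a i = c} : Finset ι) = S}
      = Nat.multinomial (univ.erase c) g := by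
  rw [card_filter_fiber_eq_card_restrict g c S hS, card_filter_card_fiber_eq_multinomial]
  · exact (Nat.multinomial_congr_of_sdiff (erase_subset c univ) (by simp)
      fun p hp => (Function.update_of_ne (ne_of_mem_erase hp) _ _).symm).symm
  · rw [sum_update_of_mem (mem_univ c), Fintype.card_coe, card_compl, ← hg,
      ← sum_erase_add univ g (mem_univ c), sdiff_singleton_eq_erase, hS]
    omega

theorem sum_filter_card_fiber_eq_nsmul {M : Type*} [AddCommMonoid M] (g : B → ℕ)
    (hg : ∑ p, g p = Fintype.card ι) (c : B) (F : Finset ι → M) :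
    ∑ a : ι → B with ∀ p, #{i | a i = p} = g p, F {i | a i = c}
      = Nat.multinomial (univ.erase c) g • ∑ S ∈ powersetCard (g c) univ, F S := by
  rw [← sum_fiberwise_of_maps_to (g := fun a => ({i | a i = c} : Finset ι))
    (t := powersetCard (g c) univ) fun a ha => by simpa using (mem_filter.1 ha).2 c, smul_sum]
  refine sum_congr rfl fun S hS => ?_
  rw [filter_filter, sum_congr rfl fun a ha => by rw [(mem_filter.1 ha).2.2], sum_const,
    card_filter_fiber_eq_multinomial g hg c S (mem_powersetCard.1 hS).2.symm]

theorem cast_multinomial {α K : Type*} [Field K] [CharZero K] (s : Finset α) (f : α → ℕ) :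
    (Nat.multinomial s f : K)
      = ((∑ i ∈ s, f i).factorial : K) / ∏ i ∈ s, ((f i).factorial : K) := by
  rw [eq_div_iff (prod_ne_zero_iff.2 fun i _ => Nat.cast_ne_zero.2 (f i).factorial_ne_zero),
    mul_comm]
  exact_mod_cast Nat.multinomial_spec s f

end Words

section Orders
variable {ι : Type*} [Fintype ι] [LinearOrder ι]

theorem card_filter_lt_and_eq_lt_card_filter_eq {B : Type*} [DecidableEq B] (a : ι → B) (i : ι) :
    #{i' | i' < i ∧ a i' = a i} < #{i' | a i' = a i} :=
  card_lt_card <| (ssubset_iff_of_subset (monotone_filter_right _ fun _ _ h => h.2)).2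
    ⟨i, by simp, by simp⟩

/-- The paper's `m` for a run in which `a*` sells at the times in `S` and stocks out after `K`
sales: the number of sales of other products before that stock-out. -/
def salesBeforeStockout (S : Finset ι) (K : ℕ) : ℕ := #{i | i ∉ S ∧ #{j | j < i ∧ j ∈ S} < K}

variable [LocallyFiniteOrderBot ι]

theorem salesBeforeStockout_card_eq {S : Finset ι} {M : ι} (hM : M ∈ S) (hmax : ∀ i ∈ S, i ≤ M) :
    salesBeforeStockout S #S = #(Iio M) + 1 - #S := by
  have hbelow : ({i | i ∉ S ∧ #{j | j < i ∧ j ∈ S} < #S} : Finset ι) = {i ∈ Iio M | i ∉ S} := by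
    ext i
    simp only [mem_filter, mem_univ, true_and, mem_Iio]
    constructor
    · rintro ⟨hiS, hcount⟩
      refine ⟨lt_of_not_ge fun hMi => ?_, hiS⟩
      have : ({j | j < i ∧ j ∈ S} : Finset ι) = S := by
        ext j
        simp only [mem_filter, mem_univ, true_and, and_iff_right_iff_imp]
        exact fun hj => (hmax j hj).trans_lt (lt_of_le_of_ne hMi (ne_of_mem_of_not_mem hM hiS))
      exact hcount.ne (congrArg card this)
    · rintro ⟨hiM, hiS⟩
      refine ⟨hiS, card_lt_card <| (ssubset_iff_of_subset fun j hj => (mem_filter.1 hj).2.2).2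
        ⟨M, hM, by simp [hiM.le]⟩⟩
  have hmem : {i ∈ Iio M | i ∈ S} = S.erase M := by
    ext i
    simp only [mem_filter, mem_Iio, mem_erase]
    exact ⟨fun h => ⟨h.1.ne, h.2⟩, fun h => ⟨lt_of_le_of_ne (hmax i h.2) h.1, h.2⟩⟩
  have hsplit := card_filter_add_card_filter_not (s := Iio M) (p := (· ∈ S))
  rw [hmem, card_erase_of_mem hM] at hsplit
  have hS : 1 ≤ #S := card_pos.2 ⟨M, hM⟩
  rw [salesBeforeStockout, hbelow]
  omega

theorem sum_powersetCard_succ_eq_sum_sum_insert {M : Type*} [AddCommMonoid M] (k : ℕ)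
    (F : Finset ι → M) :
    ∑ S ∈ powersetCard (k + 1) univ, F S = ∑ v, ∑ R ∈ powersetCard k (Iio v), F (insert v R) := by
  have hne : ∀ S ∈ powersetCard (k + 1) (univ : Finset ι), S.Nonempty := fun S hS =>
    card_pos.1 ((mem_powersetCard.1 hS).2 ▸ k.succ_pos)
  have hnot : ∀ v (R : Finset ι), R ⊆ Iio v → v ∉ R := fun v R hR hv => by simpa using hR hv
  have hmax : ∀ v (R : Finset ι), R ⊆ Iio v → (insert v R).max' (insert_nonempty v R) = v :=
    fun v R hR => le_antisymm (max'_le _ _ _ fun i hi => by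
        rcases mem_insert.1 hi with rfl | hi
        · rfl
        · exact (mem_Iio.1 (hR hi)).le)
      (le_max' _ _ (mem_insert_self v R))
  rw [sum_sigma']
  refine (sum_bij' (fun S hS => ⟨S.max' (hne S hS), S.erase (S.max' (hne S hS))⟩)
    (fun x _ => insert x.1 x.2) ?_ ?_ ?_ ?_ ?_)
  · intro S hS
    simp only [mem_sigma, mem_univ, true_and, mem_powersetCard]
    refine ⟨fun i hi => mem_Iio.2 ?_, ?_⟩
    · exact lt_of_le_of_ne (le_max' _ _ (mem_of_mem_erase hi)) (ne_of_mem_erase hi)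
    · rw [card_erase_of_mem (max'_mem _ _), (mem_powersetCard.1 hS).2, Nat.add_sub_cancel]
  · rintro ⟨v, R⟩ hR
    simp only [mem_sigma, mem_univ, true_and, mem_powersetCard] at hR ⊢
    exact ⟨subset_univ _, by rw [card_insert_of_notMem (hnot v R hR.1), hR.2]⟩
  · intro S hS
    exact insert_erase (max'_mem _ (hne S hS))
  · rintro ⟨v, R⟩ hR
    simp only [mem_sigma, mem_univ, true_and, mem_powersetCard] at hR
    simp only [hmax v R hR.1, erase_insert (hnot v R hR.1)]
  · intro S hS
    rw [insert_erase (max'_mem _ _)]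

end Orders

theorem sum_pow_salesBeforeStockout {R : Type*} [CommSemiring R] {n K : ℕ} (hK : 1 ≤ K)
    (hKn : K ≤ n) (w : R) :
    ∑ S ∈ powersetCard K (univ : Finset (Fin n)), w ^ salesBeforeStockout S K
      = ∑ j ∈ range (n - K + 1), ((K - 1 + j).choose j : R) * w ^ j := by
  obtain ⟨k, rfl⟩ := Nat.exists_eq_add_of_le' hK
  have hinner : ∀ v : Fin n,
      ∑ T ∈ powersetCard k (Iio v), w ^ salesBeforeStockout (insert v T) (k + 1)
        = ((v : ℕ).choose k : R) * w ^ ((v : ℕ) - k) := by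
    intro v
    rw [← Fin.card_Iio v, ← card_powersetCard, ← nsmul_eq_mul, ← sum_const]
    refine sum_congr rfl fun T hT => ?_
    obtain ⟨hTv, hTk⟩ := mem_powersetCard.1 hT
    have hvT : v ∉ T := fun hv => by simpa using hTv hv
    have hcard : #(insert v T) = k + 1 := by rw [card_insert_of_notMem hvT, hTk]
    rw [← hcard, salesBeforeStockout_card_eq (mem_insert_self v T), hcard, Nat.add_sub_add_right]
    intro i hi
    rcases mem_insert.1 hi with rfl | hi
    · exact le_rfl
    · exact (mem_Iio.1 (hTv hi)).le
  rw [sum_powersetCard_succ_eq_sum_sum_insert, sum_congr rfl fun v _ => hinner v,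
    Fin.sum_univ_eq_sum_range (fun v => ((v.choose k : ℕ) : R) * w ^ (v - k))]
  conv_lhs => rw [show n = k + (n - (k + 1) + 1) by omega, sum_range_add]
  rw [sum_eq_zero fun v hv => by rw [Nat.choose_eq_zero_of_lt (mem_range.1 hv), Nat.cast_zero,
    zero_mul], zero_add]
  refine sum_congr rfl fun j _ => ?_
  rw [Nat.add_sub_cancel_left, Nat.add_sub_cancel, Nat.choose_symm_add]

section Choice
variable {ι A : Type*} [Fintype ι] [LinearOrder ι] [Fintype A] [DecidableEq A]

theorem filter_card_lt_eq_ite {a : ι → A} {s : A → ℕ} {c : A}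
    (hrest : ∀ p ≠ c, #{i | a i = p} < s p) (i : ι) :
    ({p | #{i' | i' < i ∧ a i' = p} < s p} : Finset A)
      = if #{i' | i' < i ∧ a i' = c} < s c then univ else univ.erase c := by
  ext p
  rcases eq_or_ne p c with rfl | hpc
  · split_ifs with h <;> simp [h]
  · have : #{i' | i' < i ∧ a i' = p} < s p :=
      (card_le_card (monotone_filter_right _ fun _ _ h => h.2)).trans_lt (hrest p hpc)
    split_ifs <;> simp [this, hpc]

theorem prod_choice_eq_of_iia {R : Type*} [CommRing R] (P : A → Finset A → R) {a : ι → A}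
    {s m : A → ℕ} {c : A} (hcount : ∀ p, #{i | a i = p} = m p) (hc : m c = s c)
    (hrest : ∀ p ≠ c, m p < s p)
    (hIIA : ∀ p ≠ c, P p univ = (1 - P c univ) * P p (univ.erase c)) :
    ∏ i, P (a i) {p | #{i' | i' < i ∧ a i' = p} < s p}
      = P c univ ^ m c * (∏ p ∈ univ.erase c, P p (univ.erase c) ^ m p)
        * (1 - P c univ) ^ salesBeforeStockout {i | a i = c} (m c) := by
  let Q : A → R := fun p => if p = c then P c univ else P p (univ.erase c)
  have hfactor : ∀ i, P (a i) {p | #{i' | i' < i ∧ a i' = p} < s p}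
      = Q (a i) * if a i ≠ c ∧ #{i' | i' < i ∧ a i' = c} < s c then 1 - P c univ else 1 := by
    intro i
    rw [filter_card_lt_eq_ite (fun p hp => hcount p ▸ hrest p hp)]
    by_cases hi : a i = c
    · have hb : #{i' | i' < i ∧ a i' = c} < s c := by
        simpa [hi, hcount, hc] using card_filter_lt_and_eq_lt_card_filter_eq a i
      simp [Q, hi, hb]
    · by_cases hb : #{i' | i' < i ∧ a i' = c} < s c
      · simp [Q, hi, hb, hIIA (a i) hi, mul_comm]
      · simp [Q, hi, hb]
  rw [prod_congr rfl fun i _ => hfactor i, prod_mul_distrib, ← prod_fiberwise' univ a Q,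
    prod_ite, prod_const, prod_const_one, mul_one]
  simp only [prod_const, hcount]
  rw [← mul_prod_erase univ _ (mem_univ c)]
  congr 2
  · simp [Q]
  · exact prod_congr rfl fun p hp => by simp [Q, ne_of_mem_erase hp]
  · simp [salesBeforeStockout, hc]

end Choice

theorem single_stockout_sales_probability_general
    (A : Type*) [Fintype A] [DecidableEq A]
    (P : A → Finset A → ℝ)
    (s : A → ℕ)
    (aStar : A) (m : A → ℕ) (n : ℕ)
    (hn : (∑ p, m p) = n)
    (hstar : m aStar = s aStar) (hstar1 : 1 ≤ m aStar)
    (hrest : ∀ p, p ≠ aStar → m p < s p)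
    (hIIA : ∀ p, p ≠ aStar →
      P p Finset.univ = (1 - P aStar Finset.univ) * P p (Finset.univ \ {aStar})) :
    (∑ a ∈ (Finset.univ : Finset (Fin n → A)).filter (fun a =>
        (∀ p, (Finset.univ.filter (fun i => a i = p)).card = m p) ∧
        (∀ i : Fin n,
          (Finset.univ.filter (fun i' : Fin n => i' < i ∧ a i' = a i)).card < s (a i))),
        ∏ i : Fin n,
          P (a i) (Finset.univ.filter (fun p =>
            (Finset.univ.filter (fun i' : Fin n => i' < i ∧ a i' = p)).card < s p)))
      = ((Nat.factorial (n - m aStar) : ℝ)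
            / (∏ p ∈ Finset.univ \ {aStar}, (Nat.factorial (m p) : ℝ))
          * ∏ p ∈ Finset.univ \ {aStar}, P p (Finset.univ \ {aStar}) ^ m p)
        * ∑ j ∈ Finset.range (n - m aStar + 1),
            ((m aStar - 1 + j).choose j : ℝ)
              * P aStar Finset.univ ^ m aStar
              * (1 - P aStar Finset.univ) ^ j := by
  have hmn : m aStar ≤ n := hn ▸ single_le_sum (fun p _ => Nat.zero_le (m p)) (mem_univ aStar)
  have hms : ∀ p, m p ≤ s p := fun p => by
    rcases eq_or_ne p aStar with rfl | hp
    · exact hstar.le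
    · exact (hrest p hp).le
  have hfeasible : ∀ a : Fin n → A, (∀ p, #{i | a i = p} = m p) →
      ∀ i, #{i' | i' < i ∧ a i' = a i} < s (a i) := fun a ha i =>
    (card_filter_lt_and_eq_lt_card_filter_eq a i).trans_le (ha (a i) ▸ hms (a i))
  have hrestSum : ∑ p ∈ univ.erase aStar, m p = n - m aStar := by
    rw [← hn, ← sum_erase_add univ m (mem_univ aStar), Nat.add_sub_cancel]
  simp only [sdiff_singleton_eq_erase] at hIIA ⊢
  rw [filter_congr fun a _ => and_iff_left_of_imp (hfeasible a),
    sum_congr rfl fun a ha => prod_choice_eq_of_iia P (mem_filter.1 ha).2 hstar hrest hIIA,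
    ← mul_sum, sum_filter_card_fiber_eq_nsmul m (by simp [hn]) aStar
      fun S : Finset (Fin n) => (1 - P aStar univ) ^ salesBeforeStockout S (m aStar),
    sum_pow_salesBeforeStockout hstar1 hmn, nsmul_eq_mul, cast_multinomial, hrestSum]
  simp only [mul_sum]
  refine sum_congr rfl fun j _ => ?_
  ring

/-- Single stock-out, no null alternative, attraction model `P_{a:S} = f_a / Σ_{a'∈S} f_{a'}`:
if `n` customers choose sequentially from `A` (product `a*` being removed once it sells
`s a* = m a*` units, no other product stocking out), then the probability that the sales
vector equals `(m a)_{a∈A}` is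
`[(n − m_{a*})!/Π_{a≠a*} m_a! · Π_{a≠a*} P_{a:A∖{a*}}^{m_a}] ·
 Σ_{j=0}^{n−m_{a*}} C(m_{a*}−1+j, j) · P_{a*:A}^{m_{a*}} · (1−P_{a*:A})^j`,
provided `P_{a:A} = (1 − P_{a*:A}) · P_{a:A∖{a*}}` for all `a ≠ a*`. -/
theorem single_stockout_sales_probability
    (A : Type*) [Fintype A] [DecidableEq A] [Nonempty A]
    (f : A → ℝ) (hf : ∀ p, 0 < f p)
    (P : A → Finset A → ℝ) (hP : ∀ p S, P p S = f p / ∑ p' ∈ S, f p')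
    (s : A → ℕ) (hs : ∀ p, 1 ≤ s p)
    (aStar : A) (m : A → ℕ) (n : ℕ)
    (hn : (∑ p, m p) = n)
    (hstar : m aStar = s aStar) (hstar1 : 1 ≤ m aStar)
    (hrest : ∀ p, p ≠ aStar → m p < s p)
    (hIIA : ∀ p, p ≠ aStar →
      P p Finset.univ = (1 - P aStar Finset.univ) * P p (Finset.univ \ {aStar})) :
    (∑ a ∈ (Finset.univ : Finset (Fin n → A)).filter (fun a =>
        (∀ p, (Finset.univ.filter (fun i => a i = p)).card = m p) ∧
        (∀ i : Fin n,
          (Finset.univ.filter (fun i' : Fin n => i' < i ∧ a i' = a i)).card < s (a i))),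
        ∏ i : Fin n,
          P (a i) (Finset.univ.filter (fun p =>
            (Finset.univ.filter (fun i' : Fin n => i' < i ∧ a i' = p)).card < s p)))
      = ((Nat.factorial (n - m aStar) : ℝ)
            / (∏ p ∈ Finset.univ \ {aStar}, (Nat.factorial (m p) : ℝ))
          * ∏ p ∈ Finset.univ \ {aStar}, P p (Finset.univ \ {aStar}) ^ m p)
        * ∑ j ∈ Finset.range (n - m aStar + 1),
            ((m aStar - 1 + j).choose j : ℝ)
              * P aStar Finset.univ ^ m aStar
              * (1 - P aStar Finset.univ) ^ j :=
  single_stockout_sales_probability_general A P s aStar m n hn hstar hstar1 hrest hIIA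
end

section
/- Let k ≥ 1, n ≥ 1, and let ǎ_1,...,ǎ_k be distinct products with stock levels s_1,...,s_k ≥ 1 and Σ s_i ≤ n. The map sending a feasible stock-out index vector (r_1,...,r_k) (distinct indices in {1,...,n} with r_{σ(1)} < ... < r_{σ(k)} for the sorting permutation σ, satisfying the feasibility constraint r_j ≥ Σ_{i: r_i ≤ r_j} s_i) to the pair consisting of the ordered stock-out sequence (ǎ_{σ(1)},...,ǎ_{σ(k)}) and the block lengths (n^{[1]},...,n^{[k+1]}) = (r_{σ(1)}−1, r_{σ(2)}−r_{σ(1)}−1, ..., n−r_{σ(k)}) is a bijection onto the set of pairs (ordered stock-out sequence over {ǎ_1,...,ǎ_k}, block-length vector in ℕ_0^{k+1}) satisfying Σ_{j'=1}^{j}(n^{[j']}+1) ≥ Σ_{j'=1}^{j} s_{σ(j')} for j = 1,...,k and Σ_{j=1}^{k+1}(n^{[j]}+1) = n+1. -/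
/-!
Sorting separates the data: a vector `r` of distinct indices is recovered from its stock-out
order `σ = sort r` and the increasing vector `x = r ∘ σ`, and the feasibility constraint at
`r_{σ(j)}` reads `∑_{j' ≤ j} s_{σ(j')} ≤ x_j`. For `1 ≤ x_1 < ⋯ < x_k ≤ n` the block lengths
are the gaps of `0 < x_1 < ⋯ < x_k < n + 1` minus one, so the partial sums
`∑_{j' ≤ j} (n^{[j']} + 1)` telescope back to `x_j`, and to `n + 1` for `j = k + 1`.
Conversely the partial sums of any block vector of total `n + 1` form such an increasing vector.
-/

open Finset

theorem Fin.sum_filter_val_le_eq_sum_range {M : Type*} [AddCommMonoid M] {N m : ℕ}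
    (f : ℕ → M) (hm : m < N) :
    ∑ j ∈ univ.filter (fun j : Fin N => (j : ℕ) ≤ m), f j = ∑ i ∈ range (m + 1), f i := by
  rw [sum_filter, Fin.sum_univ_eq_sum_range (fun i => if i ≤ m then f i else 0), ← sum_filter]
  congr 1
  ext i
  simp only [mem_filter, mem_range]
  omega

namespace StockOut

variable {k : ℕ}

def IsSortedIndices (n : ℕ) (x : Fin k → ℕ) : Prop :=
  StrictMono x ∧ ∀ j, 1 ≤ x j ∧ x j ≤ n

/-- The paper's `r_{σ(0)} = 0, r_{σ(1)}, …, r_{σ(k)}, r_{σ(k+1)} = n + 1` for `x = r ∘ σ`,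
continued constantly. -/
def frame (n : ℕ) (x : Fin k → ℕ) : ℕ → ℕ
  | 0 => 0
  | i + 1 => if h : i < k then x ⟨i, h⟩ else n + 1

/-- `blockLengths n x j` is the paper's `n^{[j+1]}`. -/
def blockLengths (n : ℕ) (x : Fin k → ℕ) (j : Fin (k + 1)) : ℕ :=
  (if hj : (j : ℕ) < k then x ⟨j, hj⟩ else n + 1)
    - (if hj0 : (j : ℕ) = 0 then 0
        else x ⟨(j : ℕ) - 1, Nat.sub_one_lt_of_le (Nat.pos_of_ne_zero hj0) (Nat.le_of_lt_succ j.2)⟩)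
    - 1

/-- `∑_{i < m} (b_i + 1)`, reading `b` as `0` outside `Fin (k + 1)`. -/
def partialBlockSum (b : Fin (k + 1) → ℕ) (m : ℕ) : ℕ :=
  ∑ i ∈ range m, ((if h : i < k + 1 then b ⟨i, h⟩ else 0) + 1)

def stockOutIndices (b : Fin (k + 1) → ℕ) (j : Fin k) : ℕ :=
  ∑ j' ∈ univ.filter (fun j' : Fin (k + 1) => (j' : ℕ) ≤ (j : ℕ)), (b j' + 1)

section BlockLengths

variable {n : ℕ} {x : Fin k → ℕ} {b : Fin (k + 1) → ℕ}

theorem frame_succ_of_lt {i : ℕ} (hi : i < k) : frame n x (i + 1) = x ⟨i, hi⟩ := dif_pos hi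

theorem frame_succ_self : frame n x (k + 1) = n + 1 := dif_neg (lt_irrefl k)

theorem blockLengths_mk {i : ℕ} (hi : i < k + 1) :
    blockLengths n x ⟨i, hi⟩ = frame n x (i + 1) - frame n x i - 1 := by
  rcases i with _ | i
  · rfl
  · simp [blockLengths, frame, show i < k by omega]

theorem IsSortedIndices.frame_lt_frame_succ (hx : IsSortedIndices n x) {i : ℕ} (hi : i ≤ k) :
    frame n x i < frame n x (i + 1) := by
  rcases i with _ | i
  · simp only [frame]
    split_ifs
    exacts [(hx.2 _).1, n.succ_pos]
  · rw [frame_succ_of_lt (by omega)]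
    simp only [frame]
    split_ifs
    exacts [hx.1 (Fin.mk_lt_mk.2 i.lt_succ_self), Nat.lt_succ_of_le (hx.2 _).2]

theorem partialBlockSum_succ {m : ℕ} (hm : m < k + 1) :
    partialBlockSum b (m + 1) = partialBlockSum b m + (b ⟨m, hm⟩ + 1) := by
  rw [partialBlockSum, sum_range_succ, dif_pos hm]
  rfl

theorem strictMono_partialBlockSum : StrictMono (partialBlockSum b) :=
  strictMono_nat_of_lt_succ fun m => by
    rw [partialBlockSum, partialBlockSum, sum_range_succ]
    omega

theorem stockOutIndices_eq_partialBlockSum (j : Fin k) :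
    stockOutIndices b j = partialBlockSum b (j + 1) := by
  rw [stockOutIndices, partialBlockSum,
    ← Fin.sum_filter_val_le_eq_sum_range (fun i => (if h : i < k + 1 then b ⟨i, h⟩ else 0) + 1)
      (by omega : (j : ℕ) < k + 1)]
  exact sum_congr rfl fun j' _ => by rw [dif_pos j'.is_lt]

theorem sum_eq_partialBlockSum : ∑ j, (b j + 1) = partialBlockSum b (k + 1) := by
  rw [partialBlockSum, ← Fin.sum_univ_eq_sum_range]
  exact sum_congr rfl fun j _ => by rw [dif_pos j.is_lt]

theorem IsSortedIndices.partialBlockSum_blockLengths (hx : IsSortedIndices n x)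
    {m : ℕ} (hm : m ≤ k + 1) : partialBlockSum (blockLengths n x) m = frame n x m := by
  induction m with
  | zero => rfl
  | succ m ih =>
    rw [partialBlockSum_succ (by omega), ih (by omega), blockLengths_mk]
    have := hx.frame_lt_frame_succ (i := m) (by omega)
    omega

theorem IsSortedIndices.stockOutIndices_blockLengths (hx : IsSortedIndices n x) :
    stockOutIndices (blockLengths n x) = x := by
  funext j
  rw [stockOutIndices_eq_partialBlockSum, hx.partialBlockSum_blockLengths (by omega),
    frame_succ_of_lt j.is_lt]

theorem IsSortedIndices.sum_blockLengths (hx : IsSortedIndices n x) :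
    ∑ j, (blockLengths n x j + 1) = n + 1 := by
  rw [sum_eq_partialBlockSum, hx.partialBlockSum_blockLengths le_rfl, frame_succ_self]

theorem frame_stockOutIndices (hb : ∑ j, (b j + 1) = n + 1) {m : ℕ}
    (hm : m ≤ k + 1) : frame n (stockOutIndices b) m = partialBlockSum b m := by
  rcases m with _ | i
  · rfl
  · rcases (show i < k ∨ i = k by omega) with hi | rfl
    · rw [frame_succ_of_lt hi, stockOutIndices_eq_partialBlockSum]
    · rw [frame_succ_self, ← hb, sum_eq_partialBlockSum]

theorem isSortedIndices_stockOutIndices (hb : ∑ j, (b j + 1) = n + 1) :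
    IsSortedIndices n (stockOutIndices b) := by
  have hlast : partialBlockSum b (k + 1) = n + 1 := by rw [← sum_eq_partialBlockSum, hb]
  refine ⟨fun i j hij => ?_, fun j => ⟨?_, ?_⟩⟩ <;> simp only [stockOutIndices_eq_partialBlockSum]
  · exact strictMono_partialBlockSum (Nat.succ_lt_succ hij)
  · rw [partialBlockSum_succ (by omega)]
    omega
  · have := strictMono_partialBlockSum (b := b) (show (j : ℕ) + 1 < k + 1 by omega)
    omega

theorem blockLengths_stockOutIndices (hb : ∑ j, (b j + 1) = n + 1) :
    blockLengths n (stockOutIndices b) = b := by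
  funext ⟨j, hj⟩
  rw [blockLengths_mk, frame_stockOutIndices hb hj, frame_stockOutIndices hb hj.le,
    partialBlockSum_succ hj]
  omega

end BlockLengths

/-- Stock-out orders `σ` paired with the sorted stock-out indices `x = r ∘ σ` of a feasible `r`. -/
def FeasibleSorted (s : Fin k → ℕ) (n : ℕ) : Set (Equiv.Perm (Fin k) × (Fin k → ℕ)) :=
  {q | IsSortedIndices n q.2 ∧ ∀ j, ∑ j' ∈ univ.filter (· ≤ j), s (q.1 j') ≤ q.2 j}

theorem bijOn_map_blockLengths (s : Fin k → ℕ) (n : ℕ) :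
    Set.BijOn (Prod.map id (blockLengths n)) (FeasibleSorted s n)
      {q | (∀ j, ∑ j' ∈ univ.filter (· ≤ j), s (q.1 j') ≤ stockOutIndices q.2 j) ∧
        ∑ j, (q.2 j + 1) = n + 1} := by
  refine Set.InvOn.bijOn (f' := Prod.map id stockOutIndices) ⟨?_, ?_⟩ ?_ ?_
  · rintro ⟨σ, x⟩ ⟨hx, -⟩
    simp [hx.stockOutIndices_blockLengths]
  · rintro ⟨σ, b⟩ ⟨-, hb⟩
    simp [blockLengths_stockOutIndices hb]
  · rintro ⟨σ, x⟩ ⟨hx, hfeas⟩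
    exact ⟨by simpa [hx.stockOutIndices_blockLengths] using hfeas, hx.sum_blockLengths⟩
  · rintro ⟨σ, b⟩ ⟨hfeas, hb⟩
    exact ⟨isSortedIndices_stockOutIndices hb, hfeas⟩

theorem sum_filter_le_eq_sum_filter_le_perm {M α : Type*} [AddCommMonoid M] [LinearOrder α]
    (s : Fin k → M) (r : Fin k → α) {σ : Equiv.Perm (Fin k)} (hr : StrictMono (r ∘ σ))
    (j : Fin k) :
    ∑ i ∈ univ.filter (fun i => r i ≤ r (σ j)), s i = ∑ j' ∈ univ.filter (· ≤ j), s (σ j') :=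
  (sum_equiv σ (fun j' => by simpa using (hr.le_iff_le (a := j') (b := j)).symm)
    fun _ _ => rfl).symm

theorem sort_comp_symm {α : Type*} [LinearOrder α] {x : Fin k → α}
    (hx : StrictMono x) (σ : Equiv.Perm (Fin k)) :
    Tuple.sort (x ∘ σ.symm) = σ :=
  (Tuple.eq_sort_iff.2 ⟨by simpa [Function.comp_assoc] using hx.monotone,
    fun _ _ hij h => absurd h (by simpa using (hx hij).ne)⟩).symm

theorem bijOn_sort (s : Fin k → ℕ) (n : ℕ) :
    Set.BijOn (fun r : Fin k → ℕ => (Tuple.sort r, r ∘ Tuple.sort r))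
      {r | Function.Injective r ∧ (∀ j, 1 ≤ r j ∧ r j ≤ n) ∧
        ∀ j, ∑ i ∈ univ.filter (fun i => r i ≤ r j), s i ≤ r j}
      (FeasibleSorted s n) := by
  refine Set.InvOn.bijOn (f' := fun q => q.2 ∘ q.1.symm) ⟨?_, ?_⟩ ?_ ?_
  · intro r _
    simp [Function.comp_assoc]
  · rintro ⟨σ, x⟩ ⟨hx, -⟩
    simp [sort_comp_symm hx.1, Function.comp_assoc]
  · rintro r ⟨hr, hbd, hfeas⟩
    have hsort := (Tuple.monotone_sort r).strictMono_of_injective (hr.comp (Tuple.sort r).injective)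
    exact ⟨⟨hsort, fun j => hbd _⟩,
      fun j => sum_filter_le_eq_sum_filter_le_perm s r hsort j ▸ hfeas _⟩
  · rintro ⟨σ, x⟩ ⟨⟨hx, hbd⟩, hfeas⟩
    have hsort : StrictMono (x ∘ σ.symm ∘ σ) := by simpa [Function.comp_assoc] using hx
    refine ⟨hx.injective.comp σ.symm.injective, fun j => hbd _, fun j => ?_⟩
    rw [← σ.apply_symm_apply j, sum_filter_le_eq_sum_filter_le_perm s _ hsort]
    simpa using hfeas (σ.symm j)

end StockOut

/-- Bijection underlying the sampling method: with `k` distinct products (indexed by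
`Fin k`) with stock levels `s j ≥ 1`, `Σ s ≤ n`, the map sending a feasible stock-out
index vector `r` (distinct indices in `{1,…,n}` with `r_j` at least the total stock of
products stocked out at or before index `r_j`) to the pair consisting of the sorting
permutation `σ` (the stock-out order, `r∘σ` increasing) and the block-length vector
`(n^{[1]},…,n^{[k+1]}) = (r_{σ(1)}−1, r_{σ(2)}−r_{σ(1)}−1, …, n−r_{σ(k)})` is a
bijection onto the set of pairs `(σ, n^{[·]})` with
`Σ_{j'=1}^{j}(n^{[j']}+1) ≥ Σ_{j'=1}^{j} s_{σ(j')}` for `j = 1,…,k` and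
`Σ_{j=1}^{k+1}(n^{[j]}+1) = n+1`. -/
theorem stockout_vector_block_bijection (k n : ℕ)
    (s : Fin k → ℕ) :
    Set.BijOn
      (fun r : Fin k → ℕ =>
        ((Tuple.sort r : Equiv.Perm (Fin k)),
          (fun j : Fin (k + 1) =>
            (if hj : (j : ℕ) < k then r (Tuple.sort r ⟨(j : ℕ), hj⟩) else n + 1)
              - (if hj0 : (j : ℕ) = 0 then 0
                 else r (Tuple.sort r ⟨(j : ℕ) - 1, by omega⟩))
              - 1)))
      {r : Fin k → ℕ |
        Function.Injective r ∧
        (∀ j, 1 ≤ r j ∧ r j ≤ n) ∧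
        (∀ j, (∑ i ∈ Finset.univ.filter (fun i => r i ≤ r j), s i) ≤ r j)}
      {q : Equiv.Perm (Fin k) × (Fin (k + 1) → ℕ) |
        (∀ j : Fin k,
          (∑ j' ∈ Finset.univ.filter (fun j' : Fin k => j' ≤ j), s (q.1 j'))
            ≤ ∑ j' ∈ Finset.univ.filter (fun j' : Fin (k + 1) => (j' : ℕ) ≤ (j : ℕ)),
                (q.2 j' + 1)) ∧
        (∑ j : Fin (k + 1), (q.2 j + 1)) = n + 1} := by
  exact (StockOut.bijOn_map_blockLengths s n).comp (StockOut.bijOn_sort s n)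
end
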